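/- arXiv:2011.13455 — 3 statements merged into one kernel-verified Lean document; each statement's English description precedes it below -/
import Mathlib

section
/- If r' is a proper prefix of a sequence r (r = r' • r'' with r'' nonempty, where • is concatenation possibly merging the last itemset) and both are contained in a q-sequence s, then for every instance of r in s whose r'-part ends at position p, u(r, instance, s) ≤ u(r', p, s) + ru(r', p, s), where ru(r', p, s) is the sum of utilities of all q-items in s strictly after the extension item at position p. -/
/-- Decomposition bound: an instance of `r = r' • r''` whose `r'`-part ends at
extension position `p` (with extension item at linearized location `loc`) has
utility equal to the utility of its `r'`-part (which is at most `u(r',p,s)`)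
plus the utilities of the matched items of `r''`, all lying strictly after
`loc`; hence it is at most `u(r',p,s) + ru(r',p,s)`. -/
theorem inst_le_peu_at_pos {n : ℕ}
    (util : Fin n → ℝ)                  -- utilities of the linearized q-items of s
    (hpos : ∀ j, 0 < util j)
    (loc : Fin n)                       -- location of the extension item of r' at position p
    (M : Finset (Fin n))                -- q-items matched by r''
    (hM : ∀ j ∈ M, loc < j)
    (uPrefixInst : ℝ)                   -- utility of the r'-part of the instance
    (uP : ℝ)                            -- u(r', p, s): max instance utility at extension position p
    (hle : uPrefixInst ≤ uP)
    (uInst : ℝ)                         -- utility of the instance of r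
    (hdec : uInst = uPrefixInst + ∑ j ∈ M, util j)
    (ru : ℝ)                            -- ru(r', p, s)
    (hru : ru = ∑ j ∈ Finset.univ.filter (fun j => loc < j), util j) :
    uInst ≤ uP + ru := by
  have hM_sub : M ⊆ Finset.univ.filter (fun j => loc < j) := fun j hj =>
    Finset.mem_filter.2 ⟨Finset.mem_univ j, hM j hj⟩
  rw [hdec, hru]
  exact add_le_add hle (Finset.sum_le_sum_of_subset_of_nonneg hM_sub fun j _ _ => (hpos j).le)
end

section
/- Global TPEU bound: if r' is a prefix of r, then ou(r) ≤ TPEU(r') where TPEU(r') = Σ_{t ∈ ot(r')} TPEU(r', t), and consequently our(r) ≤ TPEU(r') / Σ_{t ∈ ot(r)} ptsu(t), assuming the on-shelf time periods satisfy ot(r) ⊇ ot(r'). -/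
theorem Finset.sum_le_sum_of_subset_of_eq_zero_sdiff {ι M : Type*} [DecidableEq ι]
    [AddCommMonoid M] [PartialOrder M] [IsOrderedAddMonoid M] {s t : Finset ι} {f g : ι → M}
    (hts : t ⊆ s) (hfg : ∀ i ∈ t, f i ≤ g i) (hf : ∀ i ∈ s \ t, f i = 0) :
    ∑ i ∈ s, f i ≤ ∑ i ∈ t, g i :=
  calc ∑ i ∈ s, f i = ∑ i ∈ t, f i :=
        (Finset.sum_subset hts fun i his hit => hf i (Finset.mem_sdiff.mpr ⟨his, hit⟩)).symm
    _ ≤ ∑ i ∈ t, g i := Finset.sum_le_sum hfg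

/-- Global TPEU bound: `ou(r) = Σ_{t ∈ ot(r)} pu(r,t) ≤ TPEU(r') =
Σ_{t ∈ ot(r')} TPEU(r',t)` when `r'` is a prefix of `r`, and the corresponding
bound on the on-shelf utility ratio `our(r)`. -/
theorem ou_le_TPEU {τ : Type*} [DecidableEq τ]
    (ot ot' : Finset τ)                 -- on-shelf periods of r and of r'
    (hsub : ot' ⊆ ot)
    (pu : τ → ℝ)                        -- pu(r, t)
    (TPEUt : τ → ℝ)                     -- TPEU(r', t)
    (hub : ∀ t ∈ ot', pu t ≤ TPEUt t)
    (hzero : ∀ t ∈ ot \ ot', pu t = 0)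
    (ptsu : τ → ℝ) (hptsu : ∀ t, 0 < ptsu t)
    (hne : ot.Nonempty) :
    (∑ t ∈ ot, pu t ≤ ∑ t ∈ ot', TPEUt t) ∧
    (∑ t ∈ ot, pu t) / (∑ t ∈ ot, ptsu t) ≤
      (∑ t ∈ ot', TPEUt t) / (∑ t ∈ ot, ptsu t) := by
  have hou : ∑ t ∈ ot, pu t ≤ ∑ t ∈ ot', TPEUt t :=
    Finset.sum_le_sum_of_subset_of_eq_zero_sdiff hsub hub hzero
  have hptsu_sum : 0 < ∑ t ∈ ot, ptsu t := Finset.sum_pos (fun t _ => hptsu t) hne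
  exact ⟨hou, div_le_div_of_nonneg_right hou hptsu_sum.le⟩
end

section
/- Correctness of the ARC (Avoid Redundant Calculations) strategy: let ot(r) be partitioned into A (periods where pu(r, t) has been computed) and B (periods where r was pruned, so pu(r, t) < ptsu(t)·ξ). If (Σ_{t∈A} pu(r, t) + Σ_{t∈B} ptsu(t)·ξ) / Σ_{t∈ot(r)} ptsu(t) < ξ, then our(r) < ξ, i.e., r is not an on-shelf high-utility sequential pattern. -/
theorem arc_correct_general {τ : Type*}
    (A B : Finset τ)
    (ot : Finset τ)
    (pu : τ → ℝ) (ptsu : τ → ℝ)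
    (hptsu : ∀ t ∈ ot, 0 < ptsu t)
    (ξ : ℝ)
    (hB : ∀ t ∈ B, pu t ≤ ptsu t * ξ)
    (h : (∑ t ∈ A, pu t + ξ * ∑ t ∈ B, ptsu t) / ∑ t ∈ ot, ptsu t < ξ) :
    (∑ t ∈ A, pu t + ∑ t ∈ B, pu t) / ∑ t ∈ ot, ptsu t < ξ := by
  have hpruned : ∑ t ∈ B, pu t ≤ ξ * ∑ t ∈ B, ptsu t := by
    rw [Finset.mul_sum]
    exact Finset.sum_le_sum fun t ht => (hB t ht).trans_eq (mul_comm _ _)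
  have hden : 0 ≤ ∑ t ∈ ot, ptsu t := Finset.sum_nonneg fun t ht => (hptsu t ht).le
  calc (∑ t ∈ A, pu t + ∑ t ∈ B, pu t) / ∑ t ∈ ot, ptsu t
      ≤ (∑ t ∈ A, pu t + ξ * ∑ t ∈ B, ptsu t) / ∑ t ∈ ot, ptsu t := by gcongr
    _ < ξ := h

/-- Correctness of the ARC strategy: with `ot(r)` partitioned into calculated
periods `A` and pruned periods `B` (where `pu(r,t) ≤ ptsu(t)·ξ`), if
`(Σ_{t∈A} pu(r,t) + ξ·Σ_{t∈B} ptsu(t)) / Σ_{t∈ot(r)} ptsu(t) < ξ` then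
`our(r) < ξ`, so `r` is not an osHUSP. -/
theorem arc_correct {τ : Type*} [DecidableEq τ]
    (A B : Finset τ) (hdisj : Disjoint A B)
    (ot : Finset τ) (hpart : A ∪ B = ot)
    (pu : τ → ℝ) (ptsu : τ → ℝ)
    (hptsu : ∀ t ∈ ot, 0 < ptsu t)
    (ξ : ℝ) (hξ : 0 < ξ)
    (hB : ∀ t ∈ B, pu t ≤ ptsu t * ξ)
    (h : (∑ t ∈ A, pu t + ξ * ∑ t ∈ B, ptsu t) / ∑ t ∈ ot, ptsu t < ξ) :
    (∑ t ∈ A, pu t + ∑ t ∈ B, pu t) / ∑ t ∈ ot, ptsu t < ξ :=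
  arc_correct_general A B ot pu ptsu hptsu ξ hB h
end
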